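/- Let N be a rooted binary phylogenetic network on X and let A ⊆ X. If v is a vertex of the exhibited network N_A that is a stable ancestor in N_A of a leaf ℓ ∈ A, then v is a stable ancestor of ℓ in N. -/

import Mathlib

open scoped Classical

/-- A directed graph with a finite vertex set and a multiset of arcs
(so that parallel arcs can be represented). -/
structure Digraph' (α : Type*) where
  V : Finset α
  E : Multiset (α × α)

namespace Digraph'

variable {α : Type*} [DecidableEq α]

/-- In-degree of a vertex. -/
noncomputable def inDeg (G : Digraph' α) (v : α) : ℕ :=
  (G.E.filter (fun e => e.2 = v)).card

/-- Out-degree of a vertex. -/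
noncomputable def outDeg (G : Digraph' α) (v : α) : ℕ :=
  (G.E.filter (fun e => e.1 = v)).card

/-- A (directed) path, given as its nonempty list of vertices. -/
def IsPath (G : Digraph' α) (p : List α) : Prop :=
  p ≠ [] ∧ (∀ v ∈ p, v ∈ G.V) ∧ p.Chain' (fun u v => (u, v) ∈ G.E)

/-- A directed path from `u` to `v`. -/
def PathFrom (G : Digraph' α) (u v : α) (p : List α) : Prop :=
  G.IsPath p ∧ p.head? = some u ∧ p.getLast? = some v

/-- There is a directed path from `u` to `v` (possibly trivial). -/
def Reaches (G : Digraph' α) (u v : α) : Prop := ∃ p, G.PathFrom u v p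

/-- Acyclicity: no arc whose head reaches its tail. -/
def Acyclic (G : Digraph' α) : Prop := ∀ e ∈ G.E, ¬ G.Reaches e.2 e.1

/-- `u` is a stable ancestor of `X'` (w.r.t. root `ρ`): every path from
`ρ` to each `x ∈ X'` traverses `u`. -/
def StableAncestor (G : Digraph' α) (ρ : α) (X' : Finset α) (u : α) : Prop :=
  ∀ x ∈ X', ∀ p, G.PathFrom ρ x p → u ∈ p

/-- `u` is a lowest stable ancestor of `X'`: it is a stable ancestor and
no distinct stable ancestor of `X'` is a descendant of `u`. -/
def IsLowestSA (G : Digraph' α) (ρ : α) (X' : Finset α) (u : α) : Prop :=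
  G.StableAncestor ρ X' u ∧
    ∀ v, G.StableAncestor ρ X' v → v ≠ u → ¬ G.Reaches u v

/-- Delete a vertex together with all incident arcs. -/
noncomputable def deleteVertex (G : Digraph' α) (w : α) : Digraph' α :=
  ⟨G.V.erase w, G.E.filter (fun e => e.1 ≠ w ∧ e.2 ≠ w)⟩

/-- `G'` is obtained from `G` by suppressing the in-degree-one
out-degree-one vertex `w` (replacing `(p,w)`, `(w,c)` by the arc `(p,c)`). -/
def Suppress (G : Digraph' α) (w : α) (G' : Digraph' α) : Prop :=
  G.inDeg w = 1 ∧ G.outDeg w = 1 ∧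
  ∃ p c, (p, w) ∈ G.E ∧ (w, c) ∈ G.E ∧
    G'.V = G.V.erase w ∧ G'.E = (G.deleteVertex w).E + {(p, c)}

/-- `G'` is obtained from `G` by deleting exactly one arc of a pair of
parallel arcs. -/
def DeleteParallel (G G' : Digraph' α) : Prop :=
  ∃ e : α × α, 2 ≤ G.E.count e ∧ G'.V = G.V ∧ G'.E = G.E.erase e

/-- One simplification step: suppress a degree-(1,1) vertex or delete a
parallel arc. -/
def SimpStep (G G' : Digraph' α) : Prop :=
  (∃ w, G.Suppress w G') ∨ G.DeleteParallel G'

/-- `G'` is the full simplification of `G`. -/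
def FullSimp (G G' : Digraph' α) : Prop :=
  Relation.ReflTransGen (SimpStep (α := α)) G G' ∧ ∀ G'', ¬ SimpStep G' G''

/-- The path graph of `G` on `A` (w.r.t. the vertex `r`): all vertices and
arcs lying on a directed path from `r` to a leaf in `A`. -/
noncomputable def pathGraph (G : Digraph' α) (r : α) (A : Finset α) : Digraph' α :=
  ⟨G.V.filter (fun v => ∃ x ∈ A, ∃ p, G.PathFrom r x p ∧ v ∈ p),
   G.E.filter (fun e => ∃ x ∈ A, ∃ p, G.PathFrom r x p ∧ e ∈ p.zip p.tail)⟩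

/-- Isomorphism of digraphs fixing every element of `A`. -/
def IsoOn (G1 G2 : Digraph' α) (A : Finset α) : Prop :=
  ∃ φ : α → α, Set.BijOn φ ↑G1.V ↑G2.V ∧ (∀ x ∈ A, φ x = x) ∧
    G2.E = G1.E.map (fun e => (φ e.1, φ e.2))

end Digraph'

/-- A rooted binary phylogenetic network on the leaf set `X`. -/
structure PhyloNet (α : Type*) where
  G : Digraph' α
  root : α
  X : Finset α
  root_mem : root ∈ G.V
  wf : ∀ e ∈ G.E, e.1 ∈ G.V ∧ e.2 ∈ G.V
  noParallel : ∀ e : α × α, G.E.count e ≤ 1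
  acyclic : G.Acyclic
  reach : ∀ v ∈ G.V, G.Reaches root v
  binary :
    (G.V = {root} ∧ G.E = 0 ∧ X = {root}) ∨
    (G.inDeg root = 0 ∧ G.outDeg root = 2 ∧
     (∀ x ∈ X, x ∈ G.V ∧ G.inDeg x = 1 ∧ G.outDeg x = 0) ∧
     (∀ v ∈ G.V, G.outDeg v = 0 → v ∈ X) ∧
     (∀ v ∈ G.V, v ≠ root → v ∉ X →
       (G.inDeg v = 1 ∧ G.outDeg v = 2) ∨ (G.inDeg v = 2 ∧ G.outDeg v = 1)))

namespace PhyloNet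

variable {α : Type*} [DecidableEq α]

/-- `N` is recoverable: the root is the only stable ancestor of `X`. -/
def Recoverable (N : PhyloNet α) : Prop :=
  ∀ v, N.G.StableAncestor N.root N.X v → v = N.root

/-- `{a, b}` is a cherry: two distinct leaves with a common parent. -/
def Cherry (N : PhyloNet α) (a b : α) : Prop :=
  a ∈ N.X ∧ b ∈ N.X ∧ a ≠ b ∧ ∃ p, (p, a) ∈ N.G.E ∧ (p, b) ∈ N.G.E

/-- `(a, b)` is a reticulated cherry: leaves `a, b` whose parents `p_a, p_b`
satisfy that `(p_a, p_b)` is an arc and `p_b` is a reticulation. -/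
def RetCherry (N : PhyloNet α) (a b : α) : Prop :=
  a ∈ N.X ∧ b ∈ N.X ∧ a ≠ b ∧
  ∃ pa pb, (pa, a) ∈ N.G.E ∧ (pb, b) ∈ N.G.E ∧ (pa, pb) ∈ N.G.E ∧
    N.G.inDeg pb = 2

/-- `N'` is obtained from `N` by reducing the leaf `b` of the cherry `{a, b}`:
delete `b` and its incident arc and suppress the resulting degree-two
vertex (or, if the common parent is the root, replace `N` by the
single-vertex network on `a`). -/
def ReduceCherry (N : PhyloNet α) (a b : α) (N' : PhyloNet α) : Prop :=
  N.Cherry a b ∧ N'.X = N.X.erase b ∧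
  ∃ p, (p, a) ∈ N.G.E ∧ (p, b) ∈ N.G.E ∧
    ((p = N.root ∧ N'.G.V = {a} ∧ N'.G.E = 0 ∧ N'.root = a) ∨
     (p ≠ N.root ∧ N'.root = N.root ∧ (N.G.deleteVertex b).Suppress p N'.G))

/-- `N'` is obtained from `N` by cutting the reticulated cherry `(a, b)`:
delete the reticulation arc `(p_a, p_b)` and suppress the two resulting
degree-two vertices. -/
def CutRetCherry (N : PhyloNet α) (a b : α) (N' : PhyloNet α) : Prop :=
  a ∈ N.X ∧ b ∈ N.X ∧ a ≠ b ∧ N'.X = N.X ∧ N'.root = N.root ∧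
  ∃ pa pb, (pa, a) ∈ N.G.E ∧ (pb, b) ∈ N.G.E ∧ (pa, pb) ∈ N.G.E ∧
    N.G.inDeg pb = 2 ∧
    ∃ G1 : Digraph' α, G1.V = N.G.V ∧ G1.E = N.G.E.erase (pa, pb) ∧
      ∃ G2 : Digraph' α, G1.Suppress pa G2 ∧ G2.Suppress pb N'.G

/-- One cherry-picking step: reduce a leaf of a cherry or cut a
reticulated cherry. -/
def PickStep (N N' : PhyloNet α) : Prop :=
  (∃ a b, N.ReduceCherry a b N') ∨ (∃ a b, N.CutRetCherry a b N')

/-- `N` is an orchard network: some sequence of cherry-picking operations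
reduces it to a single vertex. -/
def IsOrchard (N : PhyloNet α) : Prop :=
  ∃ M : PhyloNet α, Relation.ReflTransGen (PickStep (α := α)) N M ∧ M.G.V.card = 1

/-- `H` is the network exhibited by `N` on `A`: the full simplification of
the path graph of `N` on `A`, rooted at the lowest stable ancestor of `A`. -/
def Exhibits (N : PhyloNet α) (A : Finset α) (H : Digraph' α) : Prop :=
  ∃ r, N.G.IsLowestSA N.root A r ∧ Digraph'.FullSimp (N.G.pathGraph r A) H

end PhyloNet

/-!
A path from the root of `N` to `ℓ` passes through the stable ancestor `r` of `A`, and its part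
from `r` on is a path of the path graph. Each simplification step turns a path from a source to a
sink into one that uses only vertices of the old path: deleting a parallel arc changes nothing,
and suppressing a vertex `w` replaces `w` by its parent. The source `r` and the sink `ℓ` are never
suppressed, so `N_A` has a path from `r` to `ℓ` inside the original path; it passes through `v`.
-/

namespace List

theorem mem_zip_tail_iff {α : Type*} {l : List α} {a b : α} :
    (a, b) ∈ l.zip l.tail ↔ ∃ s t, l = s ++ a :: b :: t := by
  induction l with
  | nil => simp
  | cons x xs ih =>
    cases xs with
    | nil =>
      refine ⟨fun h => by simp at h, ?_⟩
      rintro ⟨_ | _, t, h⟩ <;> simp at h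
    | cons y ys =>
      simp only [tail_cons, zip_cons_cons, mem_cons, Prod.mk.injEq] at ih ⊢
      rw [ih]
      constructor
      · rintro (⟨rfl, rfl⟩ | ⟨s, t, hst⟩)
        · exact ⟨[], ys, rfl⟩
        · exact ⟨x :: s, t, by rw [hst]; rfl⟩
      · rintro ⟨_ | ⟨z, s⟩, t, hst⟩
        · simp_all
        · simp only [cons_append, cons.injEq] at hst
          exact Or.inr ⟨s, t, hst.2⟩

end List

namespace Digraph'

section Paths

variable {α : Type*} {G : Digraph' α}

lemma PathFrom.head_mem {u v : α} {p : List α} (hp : G.PathFrom u v p) : u ∈ G.V :=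
  hp.1.2.1 u (List.mem_of_mem_head? hp.2.1)

lemma PathFrom.append_cons_left {u v w : α} {s t : List α} (hp : G.PathFrom u v (s ++ w :: t)) :
    G.PathFrom u w (s ++ [w]) := by
  obtain ⟨⟨-, hV, hE⟩, hu, -⟩ := hp
  refine ⟨⟨by simp, fun x hx => hV x ?_, hE.prefix ⟨t, by simp⟩⟩, ?_, List.getLast?_concat⟩
  · simp only [List.mem_append, List.mem_cons] at hx ⊢
    tauto
  · cases s <;> simpa using hu

lemma PathFrom.append_cons_right {u v w : α} {s t : List α}
    (hp : G.PathFrom u v (s ++ w :: t)) : G.PathFrom w v (w :: t) := by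
  obtain ⟨⟨-, hV, hE⟩, -, hv⟩ := hp
  refine ⟨⟨by simp, fun x hx => hV x (List.mem_append_right s hx), hE.suffix ⟨s, rfl⟩⟩, rfl, ?_⟩
  rwa [List.getLast?_append_of_ne_nil s (List.cons_ne_nil w t)] at hv

/-- The paths of `G` with all vertices in `S` are the chains of this relation that start in
`G.V ∩ S`. -/
def ArcIn (G : Digraph' α) (S : Set α) (u v : α) : Prop :=
  (u, v) ∈ G.E ∧ v ∈ G.V ∧ v ∈ S

lemma PathFrom.reflTransGen_arcIn {u v : α} {p : List α} (hp : G.PathFrom u v p) :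
    Relation.ReflTransGen (G.ArcIn {x | x ∈ p}) u v := by
  obtain ⟨⟨hne, hV, hE⟩, hu, hv⟩ := hp
  have hchain : p.IsChain (G.ArcIn {x | x ∈ p}) :=
    List.IsChain.imp_of_mem_imp (fun _ b _ hb hab => ⟨hab, hV b hb, hb⟩) hE
  have := List.relationReflTransGen_of_exists_isChain p hchain hne
  rwa [(List.head_eq_iff_head?_eq_some hne).mpr hu,
    (List.getLast_eq_iff_getLast?_eq_some hne).mpr hv] at this

lemma exists_pathFrom_of_reflTransGen_arcIn {S : Set α} {u v : α} (hu : u ∈ G.V) (huS : u ∈ S)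
    (h : Relation.ReflTransGen (G.ArcIn S) u v) : ∃ p, G.PathFrom u v p ∧ ∀ x ∈ p, x ∈ S := by
  obtain ⟨l, hchain, hlast⟩ := List.exists_isChain_cons_of_relationReflTransGen h
  have hmem : ∀ x ∈ u :: l, x ∈ G.V ∧ x ∈ S :=
    List.IsChain.induction _ _ hchain (fun _ _ hxy _ => hxy.2) (fun _ => ⟨hu, huS⟩)
  refine ⟨u :: l, ⟨⟨List.cons_ne_nil u l, fun x hx => (hmem x hx).1,
    hchain.imp fun _ _ hxy => hxy.1⟩, rfl, ?_⟩, fun x hx => (hmem x hx).2⟩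
  rw [List.getLast?_eq_some_getLast (List.cons_ne_nil u l), hlast]

lemma PathFrom.pathGraph {r x : α} {A : Finset α} {p : List α} (hp : G.PathFrom r x p)
    (hx : x ∈ A) : (G.pathGraph r A).PathFrom r x p := by
  refine ⟨⟨hp.1.1, fun y hy => Finset.mem_filter.mpr ⟨hp.1.2.1 y hy, x, hx, p, hp, hy⟩, ?_⟩, hp.2⟩
  refine List.isChain_iff_forall_rel_of_append_cons_cons.mpr fun a b s t hst => ?_
  refine Multiset.mem_filter.mpr ⟨?_, x, hx, p, hp, List.mem_zip_tail_iff.mpr ⟨s, t, hst⟩⟩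
  exact List.isChain_iff_forall_rel_of_append_cons_cons.mp hp.1.2.2 hst

end Paths

variable {α : Type*} [DecidableEq α] {G G' : Digraph' α}

lemma inDeg_eq_zero_iff {v : α} : G.inDeg v = 0 ↔ ∀ e ∈ G.E, e.2 ≠ v := by
  rw [inDeg, Multiset.card_eq_zero, Multiset.filter_eq_nil]

lemma outDeg_eq_zero_iff {v : α} : G.outDeg v = 0 ↔ ∀ e ∈ G.E, e.1 ≠ v := by
  rw [outDeg, Multiset.card_eq_zero, Multiset.filter_eq_nil]

lemma eq_of_inDeg_eq_one {w u u' : α} (h : G.inDeg w = 1) (hu : (u, w) ∈ G.E)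
    (hu' : (u', w) ∈ G.E) : u = u' := by
  obtain ⟨e, he⟩ := Multiset.card_eq_one.mp h
  have m : (u, w) ∈ G.E.filter (·.2 = w) := Multiset.mem_filter.mpr ⟨hu, rfl⟩
  have m' : (u', w) ∈ G.E.filter (·.2 = w) := Multiset.mem_filter.mpr ⟨hu', rfl⟩
  rw [he, Multiset.mem_singleton] at m m'
  exact congrArg Prod.fst (m.trans m'.symm)

lemma eq_of_outDeg_eq_one {w u u' : α} (h : G.outDeg w = 1) (hu : (w, u) ∈ G.E)
    (hu' : (w, u') ∈ G.E) : u = u' := by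
  obtain ⟨e, he⟩ := Multiset.card_eq_one.mp h
  have m : (w, u) ∈ G.E.filter (·.1 = w) := Multiset.mem_filter.mpr ⟨hu, rfl⟩
  have m' : (w, u') ∈ G.E.filter (·.1 = w) := Multiset.mem_filter.mpr ⟨hu', rfl⟩
  rw [he, Multiset.mem_singleton] at m m'
  exact congrArg Prod.snd (m.trans m'.symm)

lemma Suppress.reflTransGen_arcIn {w u v : α} {S : Set α} (hG : G.Suppress w G') (hu : u ≠ w)
    (hv : v ≠ w) (h : Relation.ReflTransGen (G.ArcIn S) u v) :
    Relation.ReflTransGen (G'.ArcIn S) u v := by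
  obtain ⟨hin, hout, p, c, hpw, hwc, hV, hE⟩ := hG
  have hmemV : ∀ {z}, z ∈ G.V → z ≠ w → z ∈ G'.V := fun hz hzw =>
    hV ▸ Finset.mem_erase.mpr ⟨hzw, hz⟩
  -- along the path, the suppressed vertex `w` is replaced by its unique parent `p`
  have key : ∀ {y}, Relation.ReflTransGen (G.ArcIn S) u y →
      Relation.ReflTransGen (G'.ArcIn S) u (if y = w then p else y) := by
    intro y hy
    induction hy with
    | refl => rw [if_neg hu]
    | @tail y z _ hyz ih =>
      obtain ⟨hyzE, hzV, hzS⟩ := hyz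
      by_cases hy : y = w <;> by_cases hz : z = w <;> simp only [hy, hz, if_true, if_false] at ih ⊢
      · exact ih
      · subst hy
        obtain rfl : z = c := eq_of_outDeg_eq_one hout hyzE hwc
        refine ih.tail ⟨?_, hmemV hzV hz, hzS⟩
        rw [hE]
        exact Multiset.mem_add.mpr (Or.inr (Multiset.mem_singleton_self _))
      · subst hz
        rwa [← eq_of_inDeg_eq_one hin hyzE hpw]
      · refine ih.tail ⟨?_, hmemV hzV hz, hzS⟩
        rw [hE]
        exact Multiset.mem_add.mpr (Or.inl (Multiset.mem_filter.mpr ⟨hyzE, hy, hz⟩))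
  simpa [hv] using key h

lemma DeleteParallel.arcIn {S : Set α} {u v : α} (hG : G.DeleteParallel G')
    (h : G.ArcIn S u v) : G'.ArcIn S u v := by
  obtain ⟨e, hcount, hV, hE⟩ := hG
  obtain ⟨huv, hvV, hvS⟩ := h
  refine ⟨?_, hV ▸ hvV, hvS⟩
  rw [hE]
  by_cases he : (u, v) = e
  · subst he
    rw [← Multiset.count_pos, Multiset.count_erase_self]
    omega
  · exact (Multiset.mem_erase_of_ne he).mpr huv

lemma SimpStep.inDeg_eq_zero {u : α} (hG : SimpStep G G') (hu : G.inDeg u = 0) :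
    G'.inDeg u = 0 := by
  rw [inDeg_eq_zero_iff] at hu ⊢
  rcases hG with ⟨w, -, -, p, c, -, hwc, -, hE⟩ | ⟨e, -, -, hE⟩ <;> intro f hf <;> rw [hE] at hf
  · rcases Multiset.mem_add.mp hf with hf | hf
    · exact hu f (Multiset.mem_filter.mp hf).1
    · rw [Multiset.mem_singleton.mp hf]
      exact hu (w, c) hwc
  · exact hu f (Multiset.mem_of_mem_erase hf)

lemma SimpStep.outDeg_eq_zero {v : α} (hG : SimpStep G G') (hv : G.outDeg v = 0) :
    G'.outDeg v = 0 := by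
  rw [outDeg_eq_zero_iff] at hv ⊢
  rcases hG with ⟨w, -, -, p, c, hpw, -, -, hE⟩ | ⟨e, -, -, hE⟩ <;> intro f hf <;> rw [hE] at hf
  · rcases Multiset.mem_add.mp hf with hf | hf
    · exact hv f (Multiset.mem_filter.mp hf).1
    · rw [Multiset.mem_singleton.mp hf]
      exact hv (p, w) hpw
  · exact hv f (Multiset.mem_of_mem_erase hf)

lemma SimpStep.mem_V_of_inDeg_eq_zero {u : α} (hG : SimpStep G G') (hu : G.inDeg u = 0)
    (huV : u ∈ G.V) : u ∈ G'.V := by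
  rcases hG with ⟨w, hin, -, -, -, -, -, hV, -⟩ | ⟨e, -, hV, -⟩
  · rw [hV]
    refine Finset.mem_erase.mpr ⟨?_, huV⟩
    rintro rfl
    simp [hin] at hu
  · rwa [hV]

lemma SimpStep.reflTransGen_arcIn {S : Set α} {u v : α} (hG : SimpStep G G')
    (hu : G.inDeg u = 0) (hv : G.outDeg v = 0) (h : Relation.ReflTransGen (G.ArcIn S) u v) :
    Relation.ReflTransGen (G'.ArcIn S) u v := by
  rcases hG with ⟨w, hw⟩ | hG
  · refine hw.reflTransGen_arcIn ?_ ?_ h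
    · rintro rfl
      simp [hw.1] at hu
    · rintro rfl
      simp [hw.2.1] at hv
  · exact Relation.ReflTransGen.mono (fun _ _ => hG.arcIn) _ _ h

lemma exists_pathFrom_of_simplify {H : Digraph' α} {u v : α} {p : List α}
    (hGH : Relation.ReflTransGen SimpStep G H) (hu : G.inDeg u = 0) (hv : G.outDeg v = 0)
    (hp : G.PathFrom u v p) : ∃ q, H.PathFrom u v q ∧ ∀ x ∈ q, x ∈ p := by
  have hH : H.inDeg u = 0 ∧ H.outDeg v = 0 ∧ u ∈ H.V ∧
      Relation.ReflTransGen (H.ArcIn {x | x ∈ p}) u v := by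
    induction hGH with
    | refl => exact ⟨hu, hv, hp.head_mem, hp.reflTransGen_arcIn⟩
    | tail _ hstep ih =>
      obtain ⟨hu', hv', huV, hreach⟩ := ih
      exact ⟨hstep.inDeg_eq_zero hu', hstep.outDeg_eq_zero hv',
        hstep.mem_V_of_inDeg_eq_zero hu' huV, hstep.reflTransGen_arcIn hu' hv' hreach⟩
  exact exists_pathFrom_of_reflTransGen_arcIn hH.2.2.1 (List.mem_of_mem_head? hp.2.1) hH.2.2.2

lemma pathGraph_inDeg_eq_zero (hG : G.Acyclic) (r : α) (A : Finset α) :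
    (G.pathGraph r A).inDeg r = 0 := by
  refine inDeg_eq_zero_iff.mpr ?_
  rintro ⟨u, _⟩ he rfl
  obtain ⟨he, x, -, p, hp, hzip⟩ := Multiset.mem_filter.mp he
  obtain ⟨s, t, rfl⟩ := List.mem_zip_tail_iff.mp hzip
  exact hG _ he ⟨_, hp.append_cons_left⟩

lemma pathGraph_outDeg_le (r : α) (A : Finset α) (v : α) :
    (G.pathGraph r A).outDeg v ≤ G.outDeg v :=
  Multiset.card_le_card (Multiset.filter_le_filter _ (Multiset.filter_le _ _))

end Digraph'

lemma PhyloNet.outDeg_eq_zero_of_mem_X {α : Type*} [DecidableEq α] (N : PhyloNet α) {x : α}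
    (hx : x ∈ N.X) : N.G.outDeg x = 0 := by
  rcases N.binary with ⟨-, hE, -⟩ | ⟨-, -, hleaf, -, -⟩
  · simp [Digraph'.outDeg, hE]
  · -- `binary` is elaborated with the classical `DecidableEq` instance
    convert (hleaf x hx).2.2 using 2

theorem stableAncestor_of_stableAncestor_exhibited_general
    {α : Type*} [DecidableEq α] (N : PhyloNet α) (A : Finset α)
    (hA : A ⊆ N.X) (r : α) (H : Digraph' α)
    (hr : N.G.IsLowestSA N.root A r)
    (hH : Digraph'.FullSimp (N.G.pathGraph r A) H)
    (v ℓ : α) (hl : ℓ ∈ A)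
    (hsa : H.StableAncestor r {ℓ} v) :
    N.G.StableAncestor N.root {ℓ} v := by
  intro x hx p hp
  obtain rfl := Finset.mem_singleton.mp hx
  obtain ⟨s, t, rfl⟩ := List.append_of_mem (hr.1 x hl p hp)
  have hsink : (N.G.pathGraph r A).outDeg x = 0 :=
    Nat.le_zero.mp (N.outDeg_eq_zero_of_mem_X (hA hl) ▸ Digraph'.pathGraph_outDeg_le r A x)
  obtain ⟨q, hq, hqp⟩ := Digraph'.exists_pathFrom_of_simplify hH.1
    (Digraph'.pathGraph_inDeg_eq_zero N.acyclic r A) hsink (hp.append_cons_right.pathGraph hl)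
  exact List.mem_append_right s (hqp v (hsa x hx q hq))

/-- a vertex of the exhibited network `N_A` that is a stable
ancestor of a leaf `ℓ ∈ A` in `N_A` is a stable ancestor of `ℓ` in `N`. -/
theorem stableAncestor_of_stableAncestor_exhibited
    {α : Type*} [DecidableEq α] (N : PhyloNet α) (A : Finset α)
    (hA : A ⊆ N.X) (r : α) (H : Digraph' α)
    (hr : N.G.IsLowestSA N.root A r)
    (hH : Digraph'.FullSimp (N.G.pathGraph r A) H)
    (v ℓ : α) (hl : ℓ ∈ A) (hv : v ∈ H.V)
    (hsa : H.StableAncestor r {ℓ} v) :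
    N.G.StableAncestor N.root {ℓ} v :=
  stableAncestor_of_stableAncestor_exhibited_general N A hA r H hr hH v ℓ hl hsa
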